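/- In the resolution-lattice setup, for each h ∈ H let r_h be the unique representative of h in L' with all coordinates in [0,1). Then r_h ≤ s_h coordinatewise, where s_h is the minimal antinef cycle in class h. -/
import Mathlib


open Matrix Finset

variable {V : Type*} [Fintype V] [DecidableEq V]

/-- The rational intersection pairing associated with an integral matrix `M`. -/
noncomputable def ipair (M : Matrix V V ℤ) (x y : V → ℚ) : ℚ :=
  x ⬝ᵥ ((M.map fun n : ℤ => (n : ℚ)) *ᵥ y)

/-- The form given by `M` is negative definite. -/
def NegDef (M : Matrix V V ℤ) : Prop :=
  ∀ x : V → ℚ, x ≠ 0 → ipair M x x < 0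

/-- A rational vector has integer coordinates (i.e. lies in `L = ℤ^V`). -/
def IsIntegralVec (x : V → ℚ) : Prop := ∀ v, ∃ n : ℤ, x v = n

/-- Membership in the dual lattice `L' = {x : (x, e_v) ∈ ℤ for all v}`. -/
def InDual (M : Matrix V V ℤ) (x : V → ℚ) : Prop :=
  ∀ v, ∃ n : ℤ, ipair M x (Pi.single v 1) = n

/-- Membership in the Lipman (antinef) cone `S' = {x ∈ L' : (x, e_v) ≤ 0 ∀ v}`. -/
def InLipman (M : Matrix V V ℤ) (x : V → ℚ) : Prop :=
  InDual M x ∧ ∀ v, ipair M x (Pi.single v 1) ≤ 0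

/-- Two elements of `L'` have the same class in `H = L'/L`. -/
def SameClass (x y : V → ℚ) : Prop := IsIntegralVec (x - y)

lemma ipair_eq (M : Matrix V V ℤ) (x y : V → ℚ) :
    ipair M x y = ∑ u, ∑ v, x u * ((M u v : ℚ) * y v) := by
  unfold ipair
  simp [dotProduct, mulVec, Finset.mul_sum, Matrix.map_apply]

lemma ipair_single (M : Matrix V V ℤ) (x : V → ℚ) (v : V) :
    ipair M x (Pi.single v 1) = ∑ u, x u * (M u v : ℚ) := by
  rw [ipair_eq]
  refine Finset.sum_congr rfl fun u _ => ?_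
  rw [Finset.sum_eq_single v]
  · simp
  · intro b _ hb; simp [Pi.single_apply, hb]
  · simp

/-- Antinef vectors are coordinatewise nonnegative. -/
lemma lipman_nonneg (M : Matrix V V ℤ) (hneg : NegDef M)
    (hoff : ∀ u v : V, u ≠ v → 0 ≤ M u v) (x : V → ℚ) (hx : InLipman M x) :
    ∀ v, 0 ≤ x v := by
  set n : V → ℚ := fun v => max (-(x v)) 0 with hn
  set p : V → ℚ := fun v => max (x v) 0 with hp
  have hn0 : ∀ v, 0 ≤ n v := fun v => le_max_right _ _
  have hp0 : ∀ v, 0 ≤ p v := fun v => le_max_right _ _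
  have hpn : ∀ v, p v - n v = x v := by
    intro v
    rcases le_total (x v) 0 with h | h
    · simp [hn, hp, max_eq_left, max_eq_right, h, neg_nonneg.mpr h]
    · simp [hn, hp, max_eq_left h, neg_nonpos.mpr h]
  have hzero : ∀ v, p v * n v = 0 := by
    intro v
    rcases le_total (x v) 0 with h | h
    · simp [hp, max_eq_right h]
    · simp [hn, max_eq_right (neg_nonpos.mpr h)]
  -- ipair M p n ≥ 0
  have h1 : 0 ≤ ipair M p n := by
    rw [ipair_eq]
    refine Finset.sum_nonneg fun u _ => Finset.sum_nonneg fun v _ => ?_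
    rcases eq_or_ne u v with rfl | huv
    · rw [show p u * ((M u u : ℚ) * n u) = (M u u : ℚ) * (p u * n u) by ring, hzero u,
        mul_zero]
    · have := hoff u v huv
      have : (0:ℚ) ≤ (M u v : ℚ) := by exact_mod_cast this
      positivity
  -- ipair M x n ≤ 0
  have h2 : ipair M x n ≤ 0 := by
    have : ipair M x n = ∑ v, n v * ipair M x (Pi.single v 1) := by
      rw [ipair_eq, Finset.sum_comm]
      refine Finset.sum_congr rfl fun v _ => ?_
      rw [ipair_single, Finset.mul_sum]
      refine Finset.sum_congr rfl fun u _ => by ring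
    rw [this]
    refine Finset.sum_nonpos fun v _ => ?_
    exact mul_nonpos_of_nonneg_of_nonpos (hn0 v) (hx.2 v)
  -- ipair M n n ≥ 0
  have h3 : ipair M n n = ipair M p n - ipair M x n := by
    have hx' : (x : V → ℚ) = fun v => p v - n v := by
      funext v; exact (hpn v).symm
    rw [hx']
    simp only [ipair_eq]
    rw [← Finset.sum_sub_distrib]
    refine Finset.sum_congr rfl fun u _ => ?_
    rw [← Finset.sum_sub_distrib]
    refine Finset.sum_congr rfl fun v _ => by ring
  have h4 : 0 ≤ ipair M n n := by linarith
  have h5 : n = 0 := by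
    by_contra hne
    exact absurd (hneg n hne) (not_lt.mpr h4)
  intro v
  have : n v = 0 := by rw [h5]; rfl
  have := hpn v
  have := hp0 v
  linarith

/-- the representative `r_h` of a class `h` with all coordinates in `[0,1)` is
coordinatewise `≤ s_h`, the minimal antinef cycle in the class `h`. -/
theorem rep_le_min_antinef (M : Matrix V V ℤ) (hsym : M.IsSymm) (hneg : NegDef M)
    (hoff : ∀ u v : V, u ≠ v → 0 ≤ M u v)
    (hconn : (SimpleGraph.fromRel fun u v : V => 0 < M u v).Connected)
    (ℓ' : V → ℚ) (hℓ' : InDual M ℓ')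
    (r : V → ℚ) (hr0 : ∀ v, 0 ≤ r v) (hr1 : ∀ v, r v < 1) (hrc : SameClass r ℓ')
    (sh : V → ℚ) (hsh : InLipman M sh ∧ SameClass sh ℓ')
    (hshmin : ∀ t : V → ℚ, InLipman M t ∧ SameClass t ℓ' → ∀ v, sh v ≤ t v) :
    ∀ v, r v ≤ sh v := by
  intro v
  by_contra h
  push_neg at h
  obtain ⟨a, ha⟩ := hsh.2 v
  obtain ⟨b, hb⟩ := hrc v
  simp only [Pi.sub_apply] at ha hb
  -- sh v - r v = a - b, an integer, negative, hence ≤ -1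
  have hint : sh v - r v = ((a - b : ℤ) : ℚ) := by push_cast; linarith
  have hlt : ((a - b : ℤ) : ℚ) < 0 := by rw [← hint]; linarith
  have : (a - b : ℤ) < 0 := by exact_mod_cast hlt
  have : (a - b : ℤ) ≤ -1 := by omega
  have : ((a - b : ℤ) : ℚ) ≤ -1 := by exact_mod_cast this
  have hshv : sh v ≤ r v - 1 := by linarith [hint ▸ this]
  have hpos := lipman_nonneg M hneg hoff sh hsh.1 v
  have := hr1 v
  linarith
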